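/- arXiv:2506.07914 — 2 statements merged into one kernel-verified Lean document; each statement's English description precedes it below -/
import Mathlib

section
/- Let l be a prime number and let G be a finite group whose order is a power of l (a finite l-group). Then the augmentation ideal of the group algebra 𝔽_l[G] (the kernel of the augmentation ring homomorphism 𝔽_l[G] → 𝔽_l sending every group element to 1) is a nilpotent two-sided ideal. -/
open MonoidAlgebra

noncomputable def augm (l : ℕ) (G : Type) [Group G] :
    MonoidAlgebra (ZMod l) G →ₐ[ZMod l] ZMod l :=
  (MonoidAlgebra.lift (ZMod l) (ZMod l) G) 1

theorem augm_single (l : ℕ) (G : Type) [Group G] (g : G) (r : ZMod l) :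
    augm l G (MonoidAlgebra.single g r) = r := by
  simp [augm, MonoidAlgebra.lift_single]

noncomputable def augK (l : ℕ) (G : Type) [Group G] :
    Submodule (ZMod l) (MonoidAlgebra (ZMod l) G) :=
  LinearMap.ker (augm l G).toLinearMap

theorem pow_mono {R A : Type*} [CommSemiring R] [Semiring A] [Algebra R A]
    {M N : Submodule R A} (h : M ≤ N) : ∀ n, M ^ n ≤ N ^ n := by
  intro n
  induction n with
  | zero => simp
  | succ k ih => rw [pow_succ, pow_succ]; exact mul_le_mul' ih h

theorem main (l : ℕ) [Fact l.Prime] (m : ℕ) :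
    ∀ (G : Type) [Group G] [Fintype G], Fintype.card G ≤ m → IsPGroup l G →
      ∃ n : ℕ, n ≠ 0 ∧ (augK l G) ^ n = ⊥ := by
  induction m with
  | zero =>
    intro G _ _ h _
    have := Fintype.card_pos (α := G)
    omega
  | succ m ih =>
    intro G _ _ hcard hpG
    by_cases hG : Subsingleton G
    · refine ⟨1, one_ne_zero, ?_⟩
      rw [pow_one, eq_bot_iff]
      intro x hx
      have hx0 : augm l G x = 0 := hx
      obtain ⟨c, rfl⟩ : ∃ c, x = MonoidAlgebra.single (1 : G) c := by
        refine ⟨x.coeff 1, ?_⟩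
        ext a
        rw [Subsingleton.elim a (1 : G)]
        simp
      rw [augm_single] at hx0
      simp [hx0]
    · haveI : Nontrivial G := not_subsingleton_iff_nontrivial.mp hG
      haveI := hpG.center_nontrivial
      have hl : l.Prime := Fact.out
      -- find a central element of order l
      have hcen : IsPGroup l (Subgroup.center G) := hpG.to_subgroup _
      obtain ⟨k, hk⟩ := IsPGroup.iff_card.mp hcen
      have hdvd : l ∣ Nat.card (Subgroup.center G) := by
        rw [hk]
        have : k ≠ 0 := by
          rintro rfl
          rw [pow_zero] at hk
          exact (Finite.one_lt_card.ne' hk)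
        exact dvd_pow_self l this
      obtain ⟨z0, hz0⟩ := exists_prime_orderOf_dvd_card' l hdvd
      set z : G := (z0 : G) with hzdef
      have hzc : z ∈ Subgroup.center G := z0.2
      have hzord : orderOf z = l := by
        rw [← hz0]
        exact Subgroup.orderOf_coe z0
      -- central cyclic subgroup
      set N := Subgroup.zpowers z with hNdef
      haveI hNnormal : N.Normal := by
        constructor
        intro n hn g
        have hnc : n ∈ Subgroup.center G := by
          obtain ⟨j, rfl⟩ := hn
          exact Subgroup.zpow_mem _ hzc j
        have h1 : g * n * g⁻¹ = n := by
          rw [Subgroup.mem_center_iff.mp hnc g]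
          group
        rw [h1]
        exact hn
      haveI : Fintype (G ⧸ N) := Fintype.ofFinite _
      have hQcard : Fintype.card (G ⧸ N) ≤ m := by
        have h1 : Nat.card G = Nat.card (G ⧸ N) * Nat.card N :=
          Subgroup.card_eq_card_quotient_mul_card_subgroup N
        have h2 : Nat.card N = l := by rw [hNdef, Nat.card_zpowers, hzord]
        have h3 := hl.two_le
        have h4 : 1 ≤ Nat.card (G ⧸ N) := Nat.card_pos
        have h6 : Nat.card G ≤ m + 1 := by
          rw [Nat.card_eq_fintype_card]; exact hcard
        rw [h2] at h1
        have h7 : Nat.card (G ⧸ N) * 2 ≤ m + 1 := by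
          calc Nat.card (G ⧸ N) * 2 ≤ Nat.card (G ⧸ N) * l := Nat.mul_le_mul_left _ h3
            _ = Nat.card G := h1.symm
            _ ≤ m + 1 := h6
        rw [← Nat.card_eq_fintype_card]
        omega
      obtain ⟨n', hn'0, hn'⟩ := ih (G ⧸ N) hQcard (hpG.to_quotient N)
      -- the quotient map of group algebras
      set π : MonoidAlgebra (ZMod l) G →ₐ[ZMod l] MonoidAlgebra (ZMod l) (G ⧸ N) :=
        MonoidAlgebra.mapDomainAlgHom (ZMod l) (ZMod l) (QuotientGroup.mk' N) with hπdef
      have hπsingle : ∀ (g : G) (r : ZMod l),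
          π (MonoidAlgebra.single g r) = MonoidAlgebra.single (QuotientGroup.mk' N g) r := by
        intro g r
        simp [hπdef, Finsupp.mapDomain_single]
      have haug_comp : ∀ x, augm l (G ⧸ N) (π x) = augm l G x := by
        intro x
        have : (augm l (G ⧸ N)).comp π = augm l G := by
          apply MonoidAlgebra.algHom_ext
          intro g
          show augm l (G ⧸ N) (π (MonoidAlgebra.single g 1)) = _
          rw [hπsingle, augm_single, augm_single]
          exact Subsingleton.elim _ _
        exact congrArg (fun f => f x) this
      have hmapK : Submodule.map π.toLinearMap (augK l G) ≤ augK l (G ⧸ N) := by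
        rintro _ ⟨x, hx, rfl⟩
        have hx0 : augm l G x = 0 := hx
        show augm l (G ⧸ N) (π x) = 0
        rw [haug_comp, hx0]
      have hKn' : (augK l G) ^ n' ≤ LinearMap.ker π.toLinearMap := by
        intro x hx
        have h1 : π.toLinearMap x ∈ Submodule.map π.toLinearMap ((augK l G) ^ n') :=
          Submodule.mem_map_of_mem hx
        rw [Submodule.map_pow] at h1
        have h2 := pow_mono hmapK n' h1
        rw [hn'] at h2
        rw [LinearMap.mem_ker]
        simpa using h2
      -- the central nilpotent element c = z - 1
      set xz : MonoidAlgebra (ZMod l) G := MonoidAlgebra.single z 1 with hxzdef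
      set c : MonoidAlgebra (ZMod l) G := xz - 1 with hcdef
      have hcommz : ∀ a : MonoidAlgebra (ZMod l) G, Commute a xz := by
        intro a
        induction a using MonoidAlgebra.induction_linear with
        | zero => exact Commute.zero_left _
        | add f g hf hg => exact hf.add_left hg
        | single g r =>
          show _ * _ = _ * _
          rw [hxzdef, MonoidAlgebra.single_mul_single, MonoidAlgebra.single_mul_single,
            mul_one, one_mul, Subgroup.mem_center_iff.mp hzc g]
      have hcomm : ∀ a : MonoidAlgebra (ZMod l) G, Commute a c := by
        intro a
        exact (hcommz a).sub_right (Commute.one_right a)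
      haveI hchar : CharP (MonoidAlgebra (ZMod l) G) l := by
        have hinj : Function.Injective (algebraMap (ZMod l) (MonoidAlgebra (ZMod l) G)) := by
          intro a b h
          have h2 := congrArg (fun f : MonoidAlgebra (ZMod l) G => f.coeff (1 : G)) h
          simpa [MonoidAlgebra.coe_algebraMap] using h2
        exact charP_of_injective_algebraMap hinj l
      have hxzl : xz ^ l = 1 := by
        have hz_l : z ^ l = 1 := by rw [← hzord]; exact pow_orderOf_eq_one z
        rw [hxzdef, MonoidAlgebra.single_pow, one_pow, hz_l]
        exact (MonoidAlgebra.one_def).symm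
      have hc_l : c ^ l = 0 := by
        rw [hcdef, sub_pow_char_of_commute l (Commute.one_right xz), hxzl, one_pow, sub_self]
      -- the right-multiplication-by-c submodule
      set C : Submodule (ZMod l) (MonoidAlgebra (ZMod l) G) :=
        LinearMap.range (LinearMap.mulRight (ZMod l) c) with hCdef
      have hCmem : ∀ a : MonoidAlgebra (ZMod l) G, a * c ∈ C := by
        intro a
        exact ⟨a, rfl⟩
      set sig : MonoidAlgebra (ZMod l) (G ⧸ N) → MonoidAlgebra (ZMod l) G :=
        fun y => MonoidAlgebra.mapDomain Quotient.out y with hsigdef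
      have hsig0 : sig 0 = 0 := MonoidAlgebra.mapDomain_zero _
      have hsigadd : ∀ a b, sig (a + b) = sig a + sig b := fun a b => MonoidAlgebra.mapDomain_add _ _ _
      have hsigsingle : ∀ (q : G ⧸ N) (r : ZMod l),
          sig (MonoidAlgebra.single q r) = MonoidAlgebra.single q.out r :=
        fun q r => MonoidAlgebra.mapDomain_single
      have hsec : ∀ x : MonoidAlgebra (ZMod l) G, x - sig (π x) ∈ C := by
        intro x
        induction x using MonoidAlgebra.induction_on with
        | add f g hf hg =>
          rw [map_add, hsigadd, ← sub_add_sub_comm]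
          exact C.add_mem hf hg
        | smul r f hf =>
          have hπs : π (r • f) = r • π f := π.toLinearMap.map_smul r f
          have hss : sig (r • π f) = r • sig (π f) := MonoidAlgebra.mapDomain_smul _ r (π f)
          rw [hπs, hss, ← smul_sub]
          exact C.smul_mem r hf
        | of g =>
          rw [MonoidAlgebra.of_apply, hπsingle, hsigsingle]
          set g0 : G := ((QuotientGroup.mk' N g : G ⧸ N)).out with hg0def
          have hmk : (QuotientGroup.mk g0 : G ⧸ N) = QuotientGroup.mk g := by
            rw [hg0def]
            exact Quotient.out_eq _
          have hmem : g0⁻¹ * g ∈ N := by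
            rw [← QuotientGroup.eq]
            exact hmk
          obtain ⟨j, hj⟩ := mem_powers_iff_mem_zpowers.mpr hmem
          have hj' : z ^ j = g0⁻¹ * g := hj
          have hg : g0 * z ^ j = g := by
            rw [hj']
            group
          refine ⟨MonoidAlgebra.single g0 1 * (∑ i ∈ Finset.range j, xz ^ i), ?_⟩
          show _ * c = _
          rw [mul_assoc, hcdef, geom_sum_mul, mul_sub, mul_one, hxzdef,
            MonoidAlgebra.single_pow, one_pow, MonoidAlgebra.single_mul_single, mul_one, hg]
      have hkerC : LinearMap.ker π.toLinearMap ≤ C := by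
        intro x hx
        have h1 := hsec x
        have hx0 : π x = 0 := hx
        rw [hx0, hsig0, sub_zero] at h1
        exact h1
      -- powers of C
      have hCpow : ∀ i : ℕ,
          C ^ (i + 1) ≤ LinearMap.range (LinearMap.mulRight (ZMod l) (c ^ (i + 1))) := by
        intro i
        induction i with
        | zero =>
          rw [pow_one, pow_one]
        | succ i ihp =>
          rw [pow_succ]
          refine Submodule.mul_le.mpr ?_
          rintro a ha b ⟨b', rfl⟩
          obtain ⟨a', ha'⟩ := ihp ha
          rw [LinearMap.mulRight_apply] at ha' ⊢
          rw [← ha']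
          refine ⟨a' * b', ?_⟩
          rw [LinearMap.mulRight_apply]
          have hcb : Commute b' (c ^ (i + 1)) := (hcomm b').pow_right _
          calc a' * b' * c ^ (i + 1 + 1) = a' * b' * (c ^ (i + 1) * c) := by rw [pow_succ]
            _ = a' * (b' * c ^ (i + 1)) * c := by noncomm_ring
            _ = a' * (c ^ (i + 1) * b') * c := by rw [hcb.eq]
            _ = a' * c ^ (i + 1) * (b' * c) := by noncomm_ring
      -- conclusion
      refine ⟨n' * l, mul_ne_zero hn'0 hl.ne_zero, ?_⟩
      rw [pow_mul, eq_bot_iff]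
      have h1 : augK l G ^ n' ≤ C := le_trans hKn' hkerC
      have h2 : (augK l G ^ n') ^ l ≤ C ^ l := pow_mono h1 l
      refine le_trans h2 ?_
      have hll : l - 1 + 1 = l := Nat.succ_pred_eq_of_pos hl.pos
      have h3 : C ^ l ≤ LinearMap.range (LinearMap.mulRight (ZMod l) (c ^ l)) := by
        have h4 := hCpow (l - 1)
        rw [hll] at h4
        exact h4
      rw [hc_l] at h3
      refine le_trans h3 ?_
      rintro _ ⟨a, rfl⟩
      rw [LinearMap.mulRight_apply, mul_zero]
      exact Submodule.zero_mem ⊥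

/-- For a prime `l` and a finite `l`-group `G`, the augmentation ideal of the group
algebra `𝔽_l[G]` (the kernel of the augmentation map `𝔽_l[G] → 𝔽_l`, `g ↦ 1`) is a
nilpotent two-sided ideal:  it is closed under left and right multiplication by
arbitrary ring elements, and there is an `n` such that any product of `n` elements
of the augmentation ideal vanishes. -/
theorem augmentation_ideal_nilpotent (l : ℕ) (hl : l.Prime)
    (G : Type) [Group G] [Fintype G] (hG : ∃ k : ℕ, Fintype.card G = l ^ k)
    (aug : MonoidAlgebra (ZMod l) G →ₐ[ZMod l] ZMod l)
    (haug : aug = (MonoidAlgebra.lift (ZMod l) (ZMod l) G) 1) :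
    (∀ x r : MonoidAlgebra (ZMod l) G,
        aug x = 0 → aug (r * x) = 0 ∧ aug (x * r) = 0) ∧
    ∃ n : ℕ, n ≠ 0 ∧ ∀ f : Fin n → MonoidAlgebra (ZMod l) G,
        (∀ i, aug (f i) = 0) → (List.ofFn f).prod = 0 := by
  haveI : Fact l.Prime := ⟨hl⟩
  constructor
  · intro x r hx
    constructor <;> simp [map_mul, hx]
  · have hp : IsPGroup l G := by
      obtain ⟨k, hk⟩ := hG
      exact IsPGroup.of_card (by rw [Nat.card_eq_fintype_card, hk])
    obtain ⟨n, hn0, hK⟩ := main l (Fintype.card G) G le_rfl hp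
    refine ⟨n, hn0, ?_⟩
    intro f hf
    have hlist : ∀ L : List (MonoidAlgebra (ZMod l) G),
        (∀ x ∈ L, x ∈ augK l G) → L.prod ∈ (augK l G) ^ L.length := by
      intro L
      induction L with
      | nil =>
        intro _
        rw [List.prod_nil, List.length_nil, pow_zero]
        exact Submodule.one_le.mp le_rfl
      | cons a L ihL =>
        intro h
        rw [List.prod_cons, List.length_cons, pow_succ']
        exact Submodule.mul_mem_mul (h a List.mem_cons_self)
          (ihL fun x hx => h x (List.mem_cons_of_mem _ hx))
    have hmem : ∀ i, f i ∈ augK l G := by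
      intro i
      have : augm l G (f i) = 0 := by rw [augm, ← haug]; exact hf i
      exact this
    have h1 := hlist (List.ofFn f) (by
      intro x hx
      obtain ⟨i, rfl⟩ := List.mem_ofFn.mp hx
      exact hmem i)
    rw [List.length_ofFn, hK] at h1
    simpa using h1
end

section
/- (K₀(𝔽_l[G]) ≅ ℤ generated by the free rank-one module.) Let l be a prime number and let G be a finite group whose order is a power of l (a finite l-group). Then for every finitely generated projective left 𝔽_l[G]-module P there exists a unique natural number n such that P is isomorphic as an 𝔽_l[G]-module to the free module 𝔽_l[G]^n. In particular, two finitely generated projective 𝔽_l[G]-modules are isomorphic if and only if they have the same 𝔽_l-dimension. -/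
open Module

section Aux

variable {l : ℕ} [Fact l.Prime] {G : Type} [Group G]

/-- The augmentation map. -/
noncomputable def augK0 (l : ℕ) (G : Type) [Group G] :
    MonoidAlgebra (ZMod l) G →ₐ[ZMod l] ZMod l :=
  MonoidAlgebra.lift (ZMod l) (ZMod l) G 1

lemma augK0_of (g : G) : augK0 l G (MonoidAlgebra.of (ZMod l) G g) = 1 := by
  simp [augK0]

/-- The augmentation ideal. -/
noncomputable def augIdealK0 (l : ℕ) (G : Type) [Group G] :
    Ideal (MonoidAlgebra (ZMod l) G) :=
  RingHom.ker (augK0 l G).toRingHom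

lemma mem_augIdealK0 (r : MonoidAlgebra (ZMod l) G) :
    r ∈ augIdealK0 l G ↔ augK0 l G r = 0 := Iff.rfl

variable {M : Type} [AddCommGroup M] [Module (MonoidAlgebra (ZMod l) G) M]
  [Module (ZMod l) M] [IsScalarTower (ZMod l) (MonoidAlgebra (ZMod l) G) M]

lemma smul_comm_K0 (c : ZMod l) (r : MonoidAlgebra (ZMod l) G) (m : M) :
    r • (c • m) = c • (r • m) := by
  rw [algebra_compatible_smul (MonoidAlgebra (ZMod l) G) c m,
      algebra_compatible_smul (MonoidAlgebra (ZMod l) G) c (r • m),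
      ← mul_smul, ← mul_smul, Algebra.commutes]

lemma eval_smul_K0 (f : M →ₗ[ZMod l] ZMod l)
    (hf : ∀ (g : G) (m : M), f ((MonoidAlgebra.of (ZMod l) G g) • m) = f m)
    (r : MonoidAlgebra (ZMod l) G) (m : M) :
    f (r • m) = augK0 l G r * f m := by
  induction r using MonoidAlgebra.induction_on with
  | of g => rw [hf, augK0_of, one_mul]
  | add a b ha hb => rw [add_smul, map_add, ha, hb, map_add, add_mul]
  | smul c r h =>
      rw [smul_assoc, map_smul, map_smul (augK0 l G), h, smul_eq_mul, smul_eq_mul, mul_assoc]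

/-- Nakayama-type lemma via the fixed point theorem for `p`-groups. -/
theorem nakayamaK0 [Fintype G] (hG : IsPGroup l G) (M : Type) [AddCommGroup M]
    [Module (MonoidAlgebra (ZMod l) G) M] [Module (ZMod l) M]
    [IsScalarTower (ZMod l) (MonoidAlgebra (ZMod l) G) M] [Finite M]
    (h : (augIdealK0 l G) • (⊤ : Submodule (MonoidAlgebra (ZMod l) G) M) = ⊤) :
    Subsingleton M := by
  by_contra hns
  rw [not_subsingleton_iff_nontrivial] at hns
  classical
  haveI : NeZero l := ⟨(Fact.out : l.Prime).ne_zero⟩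
  set D := Module.Dual (ZMod l) M with hD
  haveI : Finite D := Finite.of_injective _ (DFunLike.coe_injective (F := D))
  haveI : Module.Finite (ZMod l) M := Module.Finite.of_finite
  have hDnt : Nontrivial D := by
    let b := Module.Free.chooseBasis (ZMod l) M
    obtain ⟨i⟩ := b.index_nonempty
    refine ⟨b.coord i, 0, fun hc => ?_⟩
    have h1 : (b.coord i) (b i) = 1 := by simp
    rw [hc, LinearMap.zero_apply] at h1
    exact one_ne_zero (α := ZMod l) h1.symm
  -- the action of G on the dual
  let L : G → M →ₗ[ZMod l] M := fun g =>
    { toFun := fun m => (MonoidAlgebra.of (ZMod l) G g) • m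
      map_add' := fun a b => smul_add _ a b
      map_smul' := fun c m => smul_comm_K0 c _ m }
  letI act : MulAction G D :=
    { smul := fun g f => f ∘ₗ L g⁻¹
      one_smul := fun f => by
        ext m
        show f ((MonoidAlgebra.of (ZMod l) G (1:G)⁻¹) • m) = f m
        rw [inv_one, map_one, one_smul]
      mul_smul := fun g h f => by
        ext m
        show f ((MonoidAlgebra.of (ZMod l) G (g*h)⁻¹) • m)
          = f ((MonoidAlgebra.of (ZMod l) G h⁻¹) • (MonoidAlgebra.of (ZMod l) G g⁻¹) • m)
        rw [mul_inv_rev, map_mul, mul_smul] }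
  have h0 : (0 : D) ∈ MulAction.fixedPoints G D := by
    intro g
    show (0 : D) ∘ₗ L g⁻¹ = 0
    exact LinearMap.zero_comp _
  have hdvd : l ∣ Nat.card D := by
    haveI := Fintype.ofFinite D
    haveI : Module.Finite (ZMod l) D := Module.Finite.of_finite
    rw [Nat.card_eq_fintype_card, card_eq_pow_finrank (K := ZMod l) (V := D), ZMod.card]
    exact dvd_pow_self l (Module.finrank_pos (R := ZMod l) (M := D)).ne'
  obtain ⟨f, hf, hne⟩ := hG.exists_fixed_point_of_prime_dvd_card_of_fixed_point D hdvd h0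
  have hfix : ∀ (g : G) (m : M), f ((MonoidAlgebra.of (ZMod l) G g) • m) = f m := by
    intro g m
    have h1 : g⁻¹ • f = f := hf g⁻¹
    have h2 : f ((MonoidAlgebra.of (ZMod l) G g⁻¹⁻¹) • m) = f m :=
      congrArg (fun φ : D => φ m) h1
    rwa [inv_inv] at h2
  have : f = 0 := by
    ext m
    simp only [LinearMap.zero_apply]
    have hm : m ∈ (augIdealK0 l G) • (⊤ : Submodule (MonoidAlgebra (ZMod l) G) M) := by
      rw [h]; trivial
    refine Submodule.smul_induction_on (p := fun z => f z = 0) hm ?_ ?_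
    · intro r hr x _
      rw [eval_smul_K0 f hfix, (mem_augIdealK0 r).mp hr, zero_mul]
    · intro a b ha hb
      rw [map_add, ha, hb, add_zero]
  exact hne this.symm

end Aux

section Free

variable {l : ℕ} [Fact l.Prime] {G : Type} [Group G] [Fintype G]

lemma finiteR : Finite (MonoidAlgebra (ZMod l) G) := by
  classical
  haveI : NeZero l := ⟨(Fact.out : l.Prime).ne_zero⟩
  haveI : Finite (G →₀ ZMod l) := Finite.of_fintype _
  exact Finite.of_equiv (G →₀ ZMod l) MonoidAlgebra.coeffEquiv.symm

theorem existsFreeK0 (hG : IsPGroup l G)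
    (P : Type) [AddCommGroup P] [Module (MonoidAlgebra (ZMod l) G) P]
    [Module.Finite (MonoidAlgebra (ZMod l) G) P]
    [Module.Projective (MonoidAlgebra (ZMod l) G) P]
    [Module (ZMod l) P] [IsScalarTower (ZMod l) (MonoidAlgebra (ZMod l) G) P] :
    ∃ n : ℕ, Nonempty (P ≃ₗ[MonoidAlgebra (ZMod l) G] (Fin n → MonoidAlgebra (ZMod l) G)) := by
  classical
  haveI : NeZero l := ⟨(Fact.out : l.Prime).ne_zero⟩
  haveI : Finite (MonoidAlgebra (ZMod l) G) := finiteR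
  haveI : Module.Finite (ZMod l) P :=
    Module.Finite.trans (MonoidAlgebra (ZMod l) G) P
  haveI : Finite P := Module.finite_of_finite (ZMod l)
  set J : Submodule (MonoidAlgebra (ZMod l) G) P := (augIdealK0 l G) • ⊤ with hJ
  haveI : Finite (P ⧸ J) := Finite.of_surjective _ (Submodule.mkQ_surjective J)
  set n : ℕ := finrank (ZMod l) (P ⧸ J) with hn
  let b : Basis (Fin n) (ZMod l) (P ⧸ J) := Module.finBasis (ZMod l) (P ⧸ J)
  have hmex : ∀ i : Fin n, ∃ p : P, J.mkQ p = b i :=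
    fun i => Submodule.mkQ_surjective J (b i)
  choose m hm using hmex
  -- the map
  let φ : (Fin n → MonoidAlgebra (ZMod l) G) →ₗ[MonoidAlgebra (ZMod l) G] P :=
    { toFun := fun x => ∑ i, x i • m i
      map_add' := fun x y => by
        simp only [Pi.add_apply, add_smul, Finset.sum_add_distrib]
      map_smul' := fun r x => by
        simp only [Pi.smul_apply, smul_eq_mul, mul_smul, RingHom.id_apply, Finset.smul_sum] }
  have hφapp : ∀ x, φ x = ∑ i, x i • m i := fun _ => rfl
  have hφe : ∀ i, φ (Pi.single i 1) = m i := by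
    intro i
    rw [hφapp, Finset.sum_eq_single i]
    · simp
    · intro j _ hj
      rw [Pi.single_eq_of_ne hj, zero_smul]
    · intro hi; exact absurd (Finset.mem_univ i) hi
  -- key quotient computation
  have key : ∀ (r : MonoidAlgebra (ZMod l) G) (p : P),
      J.mkQ (r • p) = augK0 l G r • J.mkQ p := by
    intro r p
    have h1 : (r - augK0 l G r • (1 : MonoidAlgebra (ZMod l) G)) • p ∈ J := by
      refine Submodule.smul_mem_smul ?_ trivial
      rw [mem_augIdealK0, map_sub, map_smul, map_one, smul_eq_mul, mul_one, sub_self]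
    have h2 : J.mkQ ((r - augK0 l G r • (1 : MonoidAlgebra (ZMod l) G)) • p) = 0 :=
      (Submodule.Quotient.mk_eq_zero J).mpr h1
    calc J.mkQ (r • p)
        = J.mkQ ((r - augK0 l G r • (1 : MonoidAlgebra (ZMod l) G)) • p)
          + J.mkQ ((augK0 l G r • (1 : MonoidAlgebra (ZMod l) G)) • p) := by
          rw [← map_add, ← add_smul, sub_add_cancel]
      _ = (augK0 l G r • (1 : MonoidAlgebra (ZMod l) G)) • J.mkQ p := by
          rw [h2, zero_add, map_smul]
      _ = augK0 l G r • J.mkQ p := by rw [smul_assoc, one_smul]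
  -- surjectivity
  have h1 : ∀ q : P ⧸ J, q ∈ Submodule.map J.mkQ (LinearMap.range φ) := by
    intro q
    have hq : q ∈ (⊤ : Submodule (ZMod l) (P ⧸ J)) := trivial
    rw [← b.span_eq] at hq
    refine Submodule.span_induction ?_ ?_ ?_ ?_ hq
    · rintro _ ⟨i, rfl⟩
      exact ⟨m i, ⟨Pi.single i 1, hφe i⟩, hm i⟩
    · exact Submodule.zero_mem _
    · exact fun x y _ _ hx hy => Submodule.add_mem _ hx hy
    · intro c x _ hx
      have hcx : c • x = (c • (1 : MonoidAlgebra (ZMod l) G)) • x := by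
        rw [smul_assoc, one_smul]
      rw [hcx]
      exact Submodule.smul_mem _ _ hx
  have hsup : LinearMap.range φ ⊔ J = ⊤ := by
    rw [eq_top_iff]
    intro p _
    obtain ⟨y, hy, hyp⟩ := h1 (J.mkQ p)
    have hpy : p - y ∈ J := by
      rw [Submodule.mkQ_apply, Submodule.mkQ_apply] at hyp
      have h := (Submodule.Quotient.eq J).mp hyp
      simpa [neg_sub] using J.neg_mem h
    exact Submodule.mem_sup.mpr ⟨y, hy, p - y, hpy, by abel⟩
  have hCsub : Subsingleton (P ⧸ LinearMap.range φ) := by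
    haveI : Finite (P ⧸ LinearMap.range φ) :=
      Finite.of_surjective _ (Submodule.mkQ_surjective (LinearMap.range φ))
    apply nakayamaK0 hG
    have hmap := congrArg (Submodule.map (LinearMap.range φ).mkQ) hsup
    rw [Submodule.map_sup, Submodule.map_top, Submodule.range_mkQ] at hmap
    have h2 : Submodule.map (LinearMap.range φ).mkQ (LinearMap.range φ) = ⊥ := by
      rw [eq_bot_iff]
      rintro _ ⟨y, hy, rfl⟩
      exact (Submodule.Quotient.mk_eq_zero _).mpr hy
    rw [h2, bot_sup_eq, hJ, Submodule.map_smul'', Submodule.map_top,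
      Submodule.range_mkQ] at hmap
    exact hmap
  have hsurj : Function.Surjective φ := by
    rw [← LinearMap.range_eq_top]
    exact Submodule.Quotient.subsingleton_iff.mp hCsub
  obtain ⟨s, hs⟩ := Module.projective_lifting_property φ LinearMap.id hsurj
  -- kernel is contained in I • ⊤
  have hker : LinearMap.ker φ ≤
      ((augIdealK0 l G) • ⊤ : Submodule (MonoidAlgebra (ZMod l) G) (Fin n → MonoidAlgebra (ZMod l) G)) := by
    intro x hx
    have hx0 : φ x = 0 := hx
    have hcoef : ∀ i, augK0 l G (x i) = 0 := by
      have h0 : ∑ i, augK0 l G (x i) • b i = 0 := by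
        calc ∑ i, augK0 l G (x i) • b i
            = ∑ i, J.mkQ (x i • m i) := by
              refine Finset.sum_congr rfl fun i _ => ?_
              rw [key (x i) (m i), hm i]
          _ = J.mkQ (φ x) := by rw [← map_sum, hφapp]
          _ = 0 := by rw [hx0, map_zero]
      exact Fintype.linearIndependent_iff.mp b.linearIndependent _ h0
    have hrepr : x = ∑ i, x i • (Pi.single i (1 : MonoidAlgebra (ZMod l) G) : Fin n → MonoidAlgebra (ZMod l) G) := by
      funext j
      rw [Finset.sum_apply, Finset.sum_eq_single j]
      · simp
      · intro i _ hij
        rw [Pi.smul_apply, Pi.single_eq_of_ne (Ne.symm hij), smul_eq_mul, mul_zero]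
      · intro hj; exact absurd (Finset.mem_univ j) hj
    rw [hrepr]
    exact Submodule.sum_mem _ fun i _ =>
      Submodule.smul_mem_smul ((mem_augIdealK0 (x i)).mpr (hcoef i)) trivial
  -- kernel trivial via Nakayama
  have hK : Subsingleton ↥(LinearMap.ker φ) := by
    apply nakayamaK0 hG
    rw [eq_top_iff]
    rintro ⟨x, hx⟩ -
    set π : (Fin n → MonoidAlgebra (ZMod l) G) →ₗ[MonoidAlgebra (ZMod l) G]
        (Fin n → MonoidAlgebra (ZMod l) G) := LinearMap.id - s ∘ₗ φ with hπ
    have hπker : ∀ y, φ (π y) = 0 := by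
      intro y
      have hsy : φ (s (φ y)) = φ y := LinearMap.ext_iff.mp hs (φ y)
      rw [hπ]
      simp only [LinearMap.sub_apply, LinearMap.id_apply, LinearMap.comp_apply, map_sub, hsy,
        sub_self]
    have hπfix : π x = x := by
      rw [hπ]
      simp only [LinearMap.sub_apply, LinearMap.id_apply, LinearMap.comp_apply]
      rw [show φ x = 0 from hx, map_zero, sub_zero]
    have hx2 : x ∈ Submodule.map π ((augIdealK0 l G) • ⊤) := ⟨x, hker hx, hπfix⟩
    rw [Submodule.map_smul''] at hx2
    have hle : Submodule.map π (⊤ : Submodule (MonoidAlgebra (ZMod l) G) _) ≤ LinearMap.ker φ := by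
      rintro _ ⟨y, -, rfl⟩
      exact hπker y
    have hx3 : x ∈ (augIdealK0 l G) • (LinearMap.ker φ) :=
      Submodule.smul_mono le_rfl hle hx2
    have heq : (augIdealK0 l G) • (LinearMap.ker φ)
        = Submodule.map (LinearMap.ker φ).subtype ((augIdealK0 l G) • ⊤) := by
      rw [Submodule.map_smul'', Submodule.map_top, Submodule.range_subtype]
    rw [heq] at hx3
    obtain ⟨z, hz, hzx⟩ := hx3
    have : z = ⟨x, hx⟩ := Subtype.ext hzx
    exact this ▸ hz
  have hkbot : LinearMap.ker φ = ⊥ := by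
    rw [eq_bot_iff]
    intro x hx
    have := Subsingleton.elim (⟨x, hx⟩ : ↥(LinearMap.ker φ)) ⟨0, Submodule.zero_mem _⟩
    simpa [Submodule.mem_bot] using congrArg Subtype.val this
  exact ⟨n, ⟨(LinearEquiv.ofBijective φ ⟨LinearMap.ker_eq_bot.mp hkbot, hsurj⟩).symm⟩⟩

lemma finrankR : finrank (ZMod l) (MonoidAlgebra (ZMod l) G) = Fintype.card G := by
  haveI : NeZero l := ⟨(Fact.out : l.Prime).ne_zero⟩
  exact (MonoidAlgebra.coeffLinearEquiv (ZMod l)).finrank_eq.trans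
    (Module.finrank_finsupp_self (R := ZMod l) (ι := G))

lemma finrankPi (n : ℕ) :
    finrank (ZMod l) (Fin n → MonoidAlgebra (ZMod l) G) = n * Fintype.card G := by
  classical
  haveI : NeZero l := ⟨(Fact.out : l.Prime).ne_zero⟩
  haveI : Finite (G →₀ ZMod l) := Finite.of_fintype _
  haveI : Finite (MonoidAlgebra (ZMod l) G) := Finite.of_equiv (G →₀ ZMod l) MonoidAlgebra.coeffEquiv.symm
  rw [Module.finrank_pi_fintype (ZMod l)]
  simp [finrankR]


end Free



/-- (`K₀(𝔽_l[G]) ≅ ℤ`, generated by the free rank-one module.) For a prime `l` and a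
finite `l`-group `G`: every finitely generated projective left `𝔽_l[G]`-module `P`
is isomorphic to `𝔽_l[G]^n` for a unique `n : ℕ`; and two finitely generated
projective `𝔽_l[G]`-modules are isomorphic iff they have the same `𝔽_l`-dimension. -/
theorem K0_of_l_group_algebra (l : ℕ) (hl : l.Prime)
    (G : Type) [Group G] [Fintype G] (hG : ∃ k : ℕ, Fintype.card G = l ^ k)
    (P Q : Type) [AddCommGroup P] [AddCommGroup Q]
    [Module (MonoidAlgebra (ZMod l) G) P] [Module (MonoidAlgebra (ZMod l) G) Q]
    [Module.Finite (MonoidAlgebra (ZMod l) G) P]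
    [Module.Projective (MonoidAlgebra (ZMod l) G) P]
    [Module.Finite (MonoidAlgebra (ZMod l) G) Q]
    [Module.Projective (MonoidAlgebra (ZMod l) G) Q]
    [Module (ZMod l) P] [IsScalarTower (ZMod l) (MonoidAlgebra (ZMod l) G) P]
    [Module (ZMod l) Q] [IsScalarTower (ZMod l) (MonoidAlgebra (ZMod l) G) Q] :
    (∃! n : ℕ, Nonempty (P ≃ₗ[MonoidAlgebra (ZMod l) G]
        (Fin n → MonoidAlgebra (ZMod l) G))) ∧
    (Nonempty (P ≃ₗ[MonoidAlgebra (ZMod l) G] Q) ↔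
        Module.finrank (ZMod l) P = Module.finrank (ZMod l) Q) := by
  haveI : Fact l.Prime := ⟨hl⟩
  obtain ⟨k, hk⟩ := hG
  have hpG : IsPGroup l G := IsPGroup.of_card (by rw [Nat.card_eq_fintype_card, hk])
  obtain ⟨n, ⟨e⟩⟩ := existsFreeK0 hpG P
  obtain ⟨q, ⟨eQ⟩⟩ := existsFreeK0 hpG Q
  have hcard : 0 < Fintype.card G := Fintype.card_pos
  have hP : Module.finrank (ZMod l) P = n * Fintype.card G :=
    (LinearEquiv.finrank_eq (e.restrictScalars (ZMod l))).trans (finrankPi n)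
  have hQ : Module.finrank (ZMod l) Q = q * Fintype.card G :=
    (LinearEquiv.finrank_eq (eQ.restrictScalars (ZMod l))).trans (finrankPi q)
  constructor
  · refine ⟨n, ⟨e⟩, ?_⟩
    rintro m ⟨e'⟩
    have h1 : Module.finrank (ZMod l) P = m * Fintype.card G :=
      (LinearEquiv.finrank_eq (e'.restrictScalars (ZMod l))).trans (finrankPi m)
    exact Nat.eq_of_mul_eq_mul_right hcard (by rw [← h1, hP])
  · constructor
    · rintro ⟨e2⟩
      exact LinearEquiv.finrank_eq (e2.restrictScalars (ZMod l))
    · intro hdim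
      have hnq : n = q :=
        Nat.eq_of_mul_eq_mul_right hcard (by rw [← hP, ← hQ, hdim])
      subst hnq
      exact ⟨e.trans eQ.symm⟩
end
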